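/- For all real numbers θ < 1/2 and C ≥ 1 there is a constant C₂ > 0 with the following property: whenever G is a group generated by a finite set X such that γ_X(n) ≤ exp(C·n^θ) for all n > 0, then for every k ≥ 0 the k-th derived subgroup G^(k) is generated by some finite set X_k with ℓ_X(X_k) ≤ C₂·4^k. -/

import Mathlib

universe u

/-- The word length of `g` with respect to the generating set `X`: the least `n`
such that `g` is a product of `n` elements of `X ∪ X⁻¹` (with length `0` for `1`). -/
noncomputable def wordLength {G : Type*} [Group G] (X : Set G) (g : G) : ℕ :=
  sInf {n : ℕ | ∃ l : List G, l.length = n ∧ (∀ x ∈ l, x ∈ X ∨ x⁻¹ ∈ X) ∧ l.prod = g}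

/-- The growth function `γ_X(n) = |{g ∈ G : ℓ_X(g) ≤ n}|`. -/
noncomputable def growth {G : Type*} [Group G] (X : Set G) (n : ℕ) : ℕ :=
  Set.ncard {g : G | wordLength X g ≤ n}

/-!
Suppose `G^(k)` is generated by its elements of length at most `R`. Then `G^(k+1)` is the normal
closure of the commutators of these generators, which have length at most `4R`. Subexponential
growth bounds the conjugators needed: if `ℓ(c) ≤ Λ` and the ball of radius `N(2N + Λ)` has fewer
than `2^N` elements, every conjugate `v c v⁻¹` lies in the subgroup generated by the `u c u⁻¹`
with `ℓ(u) < N`. Indeed, let `τ_j` be the suffix of length `j` of a geodesic word for `v`; the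
`2^N` ordered subproducts of the `τ_j c τ_j⁻¹` (`j < N`) lie in that ball, so two of them
coincide, which expresses some `τ_m c τ_m⁻¹` through those with `j < m`. Conjugating back by
`v τ_m⁻¹` writes `v c v⁻¹` through conjugates by strictly shorter elements, and induction on
`ℓ(v)` finishes. Under `γ(n) ≤ exp(C n^θ)` one may take `N ≈ Λ^(θ/(1-θ))`, which is sublinear
since `θ < 1/2`; so `R_{k+1} = 4 R_k + O(R_k^α)` with `α < 1`, whence `R_k = O(4^k)`.
-/

open Filter
open scoped commutatorElement

section OrderedSubprod

variable {G : Type*} [Group G]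

def orderedSubprod (p : ℕ → G) : ℕ → Finset ℕ → G
  | 0, _ => 1
  | n + 1, A => orderedSubprod p n A * if n ∈ A then p n else 1

theorem orderedSubprod_mem_closure (p : ℕ → G) (n : ℕ) (A : Finset ℕ) :
    orderedSubprod p n A ∈ Subgroup.closure (p '' Set.Iio n) := by
  induction n with
  | zero => exact one_mem _
  | succ n ih =>
    refine mul_mem (Subgroup.closure_mono (Set.image_mono (Set.Iio_subset_Iio n.le_succ)) ih) ?_
    split_ifs
    · exact Subgroup.subset_closure ⟨n, n.lt_succ_self, rfl⟩
    · exact one_mem _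

theorem mem_closure_of_orderedSubprod_succ_eq {p : ℕ → G} {n : ℕ} {A B : Finset ℕ}
    (h : orderedSubprod p (n + 1) A = orderedSubprod p (n + 1) B) (hA : n ∈ A) (hB : n ∉ B) :
    p n ∈ Subgroup.closure (p '' Set.Iio n) := by
  simp only [orderedSubprod, if_pos hA, if_neg hB, mul_one] at h
  rw [eq_inv_mul_of_mul_eq h]
  exact mul_mem (inv_mem (orderedSubprod_mem_closure p n A)) (orderedSubprod_mem_closure p n B)

theorem exists_mem_closure_of_orderedSubprod_eq {p : ℕ → G} {n : ℕ} {A B : Finset ℕ}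
    (hAB : ¬ ∀ j < n, (j ∈ A ↔ j ∈ B)) (h : orderedSubprod p n A = orderedSubprod p n B) :
    ∃ m < n, p m ∈ Subgroup.closure (p '' Set.Iio m) := by
  induction n with
  | zero => simp at hAB
  | succ n ih =>
    by_cases hn : n ∈ A ↔ n ∈ B
    · have hlast : (if n ∈ A then p n else 1) = if n ∈ B then p n else 1 := by simp only [hn]
      simp only [orderedSubprod, hlast, mul_left_inj] at h
      have hAB' : ¬ ∀ j < n, (j ∈ A ↔ j ∈ B) := fun hall =>
        hAB fun j hj => (Nat.lt_succ_iff_lt_or_eq.mp hj).elim (hall j) (· ▸ hn)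
      obtain ⟨m, hm, hmem⟩ := ih hAB' h
      exact ⟨m, hm.trans n.lt_succ_self, hmem⟩
    · refine ⟨n, n.lt_succ_self, ?_⟩
      by_cases hA : n ∈ A
      · exact mem_closure_of_orderedSubprod_succ_eq h hA (by tauto)
      · exact mem_closure_of_orderedSubprod_succ_eq h.symm (by tauto) hA

end OrderedSubprod

section WordLength

variable {G : Type*} [Group G] {X : Set G}

theorem wordLength_list_prod_le {l : List G} (hl : ∀ x ∈ l, x ∈ X ∪ X⁻¹) :
    wordLength X l.prod ≤ l.length :=
  Nat.sInf_le ⟨l, rfl, hl, rfl⟩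

theorem wordLength_one : wordLength X (1 : G) = 0 :=
  Nat.le_zero.mp (wordLength_list_prod_le (l := []) (by simp))

theorem wordLength_le_one_of_mem {x : G} (hx : x ∈ X) : wordLength X x ≤ 1 := by
  simpa using wordLength_list_prod_le (X := X) (l := [x]) (by simp [hx])

theorem exists_list_prod_eq_length_eq_wordLength (hX : Subgroup.closure X = ⊤) (g : G) :
    ∃ l : List G, (∀ x ∈ l, x ∈ X ∪ X⁻¹) ∧ l.prod = g ∧ l.length = wordLength X g := by
  have hg : g ∈ Submonoid.closure (X ∪ X⁻¹) := by
    rw [← Subgroup.closure_toSubmonoid, hX]; trivial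
  obtain ⟨l, hl, hlg⟩ := Submonoid.exists_list_of_mem_closure hg
  obtain ⟨l', hlen, hl', hl'g⟩ := Nat.sInf_mem (⟨_, l, rfl, hl, hlg⟩ : {n : ℕ | ∃ l : List G,
    l.length = n ∧ (∀ x ∈ l, x ∈ X ∨ x⁻¹ ∈ X) ∧ l.prod = g}.Nonempty)
  exact ⟨l', hl', hl'g, hlen⟩

variable (hX : Subgroup.closure X = ⊤)
include hX

theorem wordLength_mul_le (g h : G) :
    wordLength X (g * h) ≤ wordLength X g + wordLength X h := by
  obtain ⟨l, hl, rfl, hlg⟩ := exists_list_prod_eq_length_eq_wordLength hX g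
  obtain ⟨m, hm, rfl, hmh⟩ := exists_list_prod_eq_length_eq_wordLength hX h
  rw [← hlg, ← hmh, ← List.prod_append, ← List.length_append]
  exact wordLength_list_prod_le fun x hx => (List.mem_append.mp hx).elim (hl x) (hm x)

theorem wordLength_inv_le (g : G) : wordLength X g⁻¹ ≤ wordLength X g := by
  obtain ⟨l, hl, rfl, hlg⟩ := exists_list_prod_eq_length_eq_wordLength hX g
  rw [List.prod_inv_reverse, ← hlg]
  refine (wordLength_list_prod_le fun x hx => ?_).trans_eq (by simp)
  obtain ⟨y, hy, rfl⟩ := List.mem_map.mp (List.mem_reverse.mp hx)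
  simpa [or_comm] using hl y hy

theorem wordLength_conj_le (u c : G) :
    wordLength X (u * c * u⁻¹) ≤ wordLength X c + 2 * wordLength X u := by
  have := wordLength_mul_le hX (u * c) u⁻¹
  have := wordLength_mul_le hX u c
  have := wordLength_inv_le hX u
  omega

theorem wordLength_commutatorElement_le (a b : G) :
    wordLength X ⁅a, b⁆ ≤ 2 * wordLength X a + 2 * wordLength X b := by
  have := wordLength_mul_le hX (a * b * a⁻¹) b⁻¹
  have := wordLength_conj_le hX a b
  have := wordLength_inv_le hX b
  rw [commutatorElement_def]
  omega

theorem finite_setOf_wordLength_le (hXfin : X.Finite) (n : ℕ) :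
    {g : G | wordLength X g ≤ n}.Finite := by
  have : Finite ↥(X ∪ X⁻¹) := (hXfin.union hXfin.inv).to_subtype
  refine ((List.finite_length_le ↥(X ∪ X⁻¹) n).image fun l => (l.map (↑)).prod).subset ?_
  intro g hg
  obtain ⟨l, hl, rfl, hlen⟩ := exists_list_prod_eq_length_eq_wordLength hX g
  replace hg : l.length ≤ n := hlen ▸ hg
  lift l to List ↥(X ∪ X⁻¹) using hl
  exact ⟨l, by simpa using hg, rfl⟩

theorem exists_suffix_wordLength_le (v : G) :
    ∃ τ : ℕ → G, ∀ j ≤ wordLength X v,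
      wordLength X (τ j) ≤ j ∧ wordLength X (v * (τ j)⁻¹) ≤ wordLength X v - j := by
  obtain ⟨l, hl, rfl, hlen⟩ := exists_list_prod_eq_length_eq_wordLength hX v
  refine ⟨fun j => (l.drop (l.length - j)).prod, fun j hj => ⟨?_, ?_⟩⟩
  · refine (wordLength_list_prod_le fun x hx => hl x (List.mem_of_mem_drop hx)).trans ?_
    simp only [List.length_drop]
    omega
  · have hsplit := congrArg List.prod (List.take_append_drop (l.length - j) l)
    rw [List.prod_append] at hsplit
    rw [← hlen, ← hsplit, mul_inv_cancel_right]
    refine (wordLength_list_prod_le fun x hx => hl x (List.mem_of_mem_take hx)).trans ?_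
    simp

theorem wordLength_orderedSubprod_le {p : ℕ → G} {n L : ℕ}
    (hp : ∀ j < n, wordLength X (p j) ≤ L) (A : Finset ℕ) :
    wordLength X (orderedSubprod p n A) ≤ n * L := by
  induction n with
  | zero => simp [orderedSubprod, wordLength_one]
  | succ n ih =>
    have hlast : wordLength X (if n ∈ A then p n else 1) ≤ L := by
      split_ifs
      · exact hp n n.lt_succ_self
      · simp [wordLength_one]
    have := ih fun j hj => hp j (by omega)
    have := wordLength_mul_le hX (orderedSubprod p n A) (if n ∈ A then p n else 1)
    simp only [orderedSubprod]
    nlinarith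

theorem exists_mem_closure_of_growth_lt (hXfin : X.Finite) (p : ℕ → G) {N L : ℕ}
    (hp : ∀ j < N, wordLength X (p j) ≤ L) (hN : growth X (N * L) < 2 ^ N) :
    ∃ m < N, p m ∈ Subgroup.closure (p '' Set.Iio m) := by
  classical
  have hball := finite_setOf_wordLength_le hX hXfin (N * L)
  have hcard : hball.toFinset.card < (Finset.range N).powerset.card := by
    rwa [Finset.card_powerset, Finset.card_range, ← Set.ncard_eq_toFinset_card _ hball]
  obtain ⟨A, hA, B, hB, hne, heq⟩ := Finset.exists_ne_map_eq_of_card_lt_of_maps_to hcard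
    fun A _ => by simpa using wordLength_orderedSubprod_le hX hp A
  refine exists_mem_closure_of_orderedSubprod_eq (fun hall => hne ?_) heq
  rw [Finset.mem_powerset] at hA hB
  ext j
  by_cases hj : j < N
  · exact hall j hj
  · exact iff_of_false (fun h => hj (Finset.mem_range.mp (hA h)))
      (fun h => hj (Finset.mem_range.mp (hB h)))

theorem conj_mem_closure_conj_of_growth_lt (hXfin : X.Finite) {c : G} {Λ N : ℕ}
    (hc : wordLength X c ≤ Λ) (hN : growth X (N * (2 * N + Λ)) < 2 ^ N) (v : G) :
    v * c * v⁻¹ ∈ Subgroup.closure {g | ∃ u, wordLength X u < N ∧ g = u * c * u⁻¹} := by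
  set H := Subgroup.closure {g | ∃ u, wordLength X u < N ∧ g = u * c * u⁻¹}
  suffices ∀ n, ∀ v : G, wordLength X v = n → v * c * v⁻¹ ∈ H from this _ v rfl
  intro n
  induction n using Nat.strong_induction_on with | _ n ih => ?_
  rintro v rfl
  by_cases hvN : wordLength X v < N
  · exact Subgroup.subset_closure ⟨v, hvN, rfl⟩
  obtain ⟨τ, hτ⟩ := exists_suffix_wordLength_le hX v
  have hp : ∀ j < N, wordLength X (τ j * c * (τ j)⁻¹) ≤ 2 * N + Λ := fun j hj => by
    have := (hτ j (by omega)).1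
    have := wordLength_conj_le hX (τ j) c
    omega
  obtain ⟨m, hmN, hm⟩ := exists_mem_closure_of_growth_lt hX hXfin _ hp hN
  have hconj : (fun j => τ j * c * (τ j)⁻¹) '' Set.Iio m ⊆
      H.comap (MulAut.conj (v * (τ m)⁻¹)).toMonoidHom := by
    rintro _ ⟨j, hj, rfl⟩
    rw [Set.mem_Iio] at hj
    have := (hτ m (by omega)).2
    have := (hτ j (by omega)).1
    have := wordLength_mul_le hX (v * (τ m)⁻¹) (τ j)
    have hmem := ih (wordLength X (v * (τ m)⁻¹ * τ j)) (by omega) _ rfl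
    rw [SetLike.mem_coe, Subgroup.mem_comap]
    convert hmem using 1
    simp only [MulEquiv.coe_toMonoidHom, MulAut.conj_apply]
    group
  have hmem := (Subgroup.closure_le _).mpr hconj hm
  rw [Subgroup.mem_comap] at hmem
  convert hmem using 1
  simp only [MulEquiv.coe_toMonoidHom, MulAut.conj_apply]
  group

end WordLength

theorem Subgroup.commutator_closure_le_normalClosure {G : Type*} [Group G] (S T : Set G) :
    ⁅closure S, closure T⁆ ≤ normalClosure (Set.image2 (⁅·, ·⁆) S T) := by
  set N := normalClosure (Set.image2 (⁅·, ·⁆) S T)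
  set π := QuotientGroup.mk' N
  have hcomm : π '' S ⊆ Subgroup.centralizer (π '' T) := by
    rintro _ ⟨s, hs, rfl⟩ _ ⟨t, ht, rfl⟩
    have h1 : ⁅s, t⁆ ∈ π.ker := by
      rw [QuotientGroup.ker_mk']
      exact subset_normalClosure (Set.mem_image2_of_mem hs ht)
    rw [MonoidHom.mem_ker, map_commutatorElement, commutatorElement_eq_one_iff_commute] at h1
    exact h1.eq.symm
  rw [← QuotientGroup.ker_mk' N, ← Subgroup.map_eq_bot_iff, Subgroup.map_commutator,
    MonoidHom.map_closure, MonoidHom.map_closure, Subgroup.commutator_eq_bot_iff_le_centralizer,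
    Subgroup.centralizer_closure]
  exact (Subgroup.closure_le _).mpr hcomm

-- A commutator of generators of length `≤ R` has length `≤ 4 R`, and conjugating it by elements
-- of length `< W (4 R)` adds at most `2 W (4 R)`.
def derivedRadius (W : ℕ → ℕ) : ℕ → ℕ
  | 0 => 1
  | k + 1 => 4 * derivedRadius W k + 2 * W (4 * derivedRadius W k)

theorem derivedSeries_eq_closure_wordLength_le {G : Type*} [Group G] {X : Set G}
    (hX : Subgroup.closure X = ⊤) (hXfin : X.Finite) (W : ℕ → ℕ)
    (hW : ∀ Λ, growth X (W Λ * (2 * W Λ + Λ)) < 2 ^ W Λ) (k : ℕ) :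
    derivedSeries G k =
      Subgroup.closure {g | g ∈ derivedSeries G k ∧ wordLength X g ≤ derivedRadius W k} := by
  induction k with
  | zero =>
    refine le_antisymm ?_ ((Subgroup.closure_le _).mpr fun g hg => hg.1)
    rw [derivedSeries_zero, ← hX]
    exact Subgroup.closure_mono fun x hx =>
      ⟨Subgroup.subset_closure hx, wordLength_le_one_of_mem hx⟩
  | succ k ih =>
    refine le_antisymm ?_ ((Subgroup.closure_le _).mpr fun g hg => hg.1)
    set S := {g | g ∈ derivedSeries G k ∧ wordLength X g ≤ derivedRadius W k}
    calc derivedSeries G (k + 1) = ⁅Subgroup.closure S, Subgroup.closure S⁆ := by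
          rw [derivedSeries_succ, ← ih]
      _ ≤ Subgroup.normalClosure (Set.image2 (⁅·, ·⁆) S S) :=
          Subgroup.commutator_closure_le_normalClosure S S
      _ ≤ _ := by
          refine (Subgroup.closure_le _).mpr ?_
          intro x hx
          obtain ⟨_, ⟨a, ha, b, hb, rfl⟩, hconj⟩ := Group.mem_conjugatesOfSet_iff.mp hx
          obtain ⟨v, rfl⟩ := isConj_iff.mp hconj
          have hab : wordLength X ⁅a, b⁆ ≤ 4 * derivedRadius W k := by
            have := wordLength_commutatorElement_le hX a b
            have := ha.2
            have := hb.2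
            omega
          refine (Subgroup.closure_le _).mpr ?_
            (conj_mem_closure_conj_of_growth_lt hX hXfin hab (hW _) v)
          rintro _ ⟨u, hu, rfl⟩
          refine Subgroup.subset_closure ⟨(derivedSeries_normal G (k + 1)).conj_mem _ ?_ u, ?_⟩
          · rw [derivedSeries_succ]
            exact Subgroup.commutator_mem_commutator ha.1 hb.1
          · have := wordLength_conj_le hX u ⁅a, b⁆
            simp only [derivedRadius]
            omega

theorem exists_finset_closure_eq_derivedSeries {G : Type*} [Group G] {X : Set G}
    (hX : Subgroup.closure X = ⊤) (hXfin : X.Finite) (W : ℕ → ℕ)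
    (hW : ∀ Λ, growth X (W Λ * (2 * W Λ + Λ)) < 2 ^ W Λ) (k : ℕ) :
    ∃ Xk : Finset G, Subgroup.closure (Xk : Set G) = derivedSeries G k ∧
      Xk.sup (wordLength X) ≤ derivedRadius W k := by
  have hball : {g | g ∈ derivedSeries G k ∧ wordLength X g ≤ derivedRadius W k}.Finite :=
    (finite_setOf_wordLength_le hX hXfin _).subset fun g hg => hg.2
  refine ⟨hball.toFinset, ?_, Finset.sup_le fun g hg => (hball.mem_toFinset.mp hg).2⟩
  rw [Set.Finite.coe_toFinset, ← derivedSeries_eq_closure_wordLength_le hX hXfin W hW k]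

theorem eventually_mul_rpow_le_self {α : ℝ} (hα : α < 1) (K : ℝ) :
    ∀ᶠ x : ℝ in atTop, K * x ^ α ≤ x := by
  filter_upwards [eventually_gt_atTop 0, eventually_ge_atTop (|K| ^ (1 - α)⁻¹)] with x hx hKx
  have hK : |K| ≤ x ^ (1 - α) :=
    (Real.rpow_inv_le_iff_of_pos (abs_nonneg K) hx.le (by linarith)).mp hKx
  calc K * x ^ α ≤ |K| * x ^ α := by gcongr; exact le_abs_self K
    _ ≤ x ^ (1 - α) * x ^ α := by gcongr
    _ = x := by rw [← Real.rpow_add hx]; simp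

theorem exists_le_mul_pow_of_le_mul_add_rpow {r : ℕ → ℝ} {b α A : ℝ} (hb : 1 < b)
    (hα0 : 0 ≤ α) (hα : α < 1) (hA : 0 ≤ A) (hr0 : ∀ k, 0 ≤ r k)
    (hr : ∀ k, r (k + 1) ≤ b * r k + A * (1 + r k ^ α)) :
    ∃ C₂, 0 < C₂ ∧ ∀ k, r k ≤ C₂ * b ^ k := by
  set ρ := b ^ α
  have hρ1 : 1 ≤ ρ := Real.one_le_rpow hb.le hα0
  have hρb : ρ < b := Real.rpow_lt_self_of_one_lt hb hα
  obtain ⟨D, hD1, hD0, hD⟩ : ∃ D : ℝ, 1 ≤ D ∧ r 0 ≤ D ∧ 3 * A / (b - ρ) * D ^ α ≤ D :=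
    ((eventually_ge_atTop 1).and ((eventually_ge_atTop (r 0)).and
      (eventually_mul_rpow_le_self hα _))).exists
  have hDα : 1 ≤ D ^ α := Real.one_le_rpow hD1 hα0
  have hAD : 3 * A * D ^ α ≤ (b - ρ) * D := by
    rw [div_mul_eq_mul_div, div_le_iff₀ (by linarith)] at hD
    linarith
  -- the deficit `D * ρ ^ k` absorbs the lower-order term `A * (1 + r k ^ α)`
  have key : ∀ k, r k ≤ D * (2 * b ^ k - ρ ^ k) := by
    intro k
    induction k with
    | zero => norm_num; exact hD0
    | succ k ih =>
      have hρk : 1 ≤ ρ ^ k := one_le_pow₀ hρ1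
      have hrk : r k ≤ 2 * D * b ^ k := by nlinarith
      have hpow : r k ^ α ≤ 2 * D ^ α * ρ ^ k :=
        calc r k ^ α ≤ (2 * D * b ^ k) ^ α := Real.rpow_le_rpow (hr0 k) hrk hα0
          _ = 2 ^ α * D ^ α * ρ ^ k := by
            rw [Real.mul_rpow (by positivity) (by positivity),
              Real.mul_rpow (by positivity) (by positivity), ← Real.rpow_pow_comm (by linarith)]
          _ ≤ 2 * D ^ α * ρ ^ k := by
            gcongr; exact Real.rpow_le_self_of_one_le one_le_two hα.le
      have hlow : A * (1 + r k ^ α) ≤ (b - ρ) * D * ρ ^ k := by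
        have : 1 ≤ D ^ α * ρ ^ k := one_le_mul_of_one_le_of_one_le hDα hρk
        calc A * (1 + r k ^ α) ≤ (3 * A * D ^ α) * ρ ^ k := by nlinarith
          _ ≤ (b - ρ) * D * ρ ^ k := by gcongr
      calc r (k + 1) ≤ b * r k + A * (1 + r k ^ α) := hr k
        _ ≤ b * (D * (2 * b ^ k - ρ ^ k)) + (b - ρ) * D * ρ ^ k := by gcongr
        _ = D * (2 * b ^ (k + 1) - ρ ^ (k + 1)) := by ring
  refine ⟨2 * D, by positivity, fun k => (key k).trans ?_⟩
  have : 0 ≤ ρ ^ k := by positivity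
  nlinarith

theorem mul_rpow_mul_add_lt {C θ n Λ : ℝ} (hC : 0 ≤ C) (hθ0 : 0 ≤ θ) (hθ1 : θ ≤ 1) (hn : 0 < n)
    (hΛ : 0 ≤ Λ) (h₁ : 6 * C * n ^ θ * n ^ θ ≤ n) (h₂ : 6 * C * n ^ θ * Λ ^ θ ≤ n) :
    C * (n * (2 * n + Λ)) ^ θ < n * Real.log 2 := by
  have h2n : (2 * n) ^ θ ≤ 2 * n ^ θ := by
    rw [Real.mul_rpow zero_le_two hn.le]
    gcongr
    exact Real.rpow_le_self_of_one_le one_le_two hθ1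
  calc C * (n * (2 * n + Λ)) ^ θ = C * n ^ θ * (2 * n + Λ) ^ θ := by
        rw [Real.mul_rpow hn.le (by positivity), mul_assoc]
    _ ≤ C * n ^ θ * ((2 * n) ^ θ + Λ ^ θ) := by
        gcongr
        exact Real.rpow_add_le_add_rpow (by positivity) hΛ hθ0 hθ1
    _ ≤ C * n ^ θ * (2 * n ^ θ + Λ ^ θ) := by gcongr
    _ = 6 * C * n ^ θ * n ^ θ / 3 + 6 * C * n ^ θ * Λ ^ θ / 6 := by ring
    _ ≤ n / 3 + n / 6 := by gcongr
    _ < n * Real.log 2 := by nlinarith [Real.log_two_gt_d9]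

-- `N = windowSize C θ Λ` satisfies `6 C ≤ N ^ (1 - 2θ)` and `6 C Λ ^ θ ≤ N ^ (1 - θ)`.
noncomputable def windowSize (C θ : ℝ) (Λ : ℕ) : ℕ :=
  ⌈(6 * C) ^ (1 - 2 * θ)⁻¹ + (6 * C * (Λ : ℝ) ^ θ) ^ (1 - θ)⁻¹⌉₊

theorem growth_lt_two_pow_windowSize {G : Type*} [Group G] {X : Set G} {C θ : ℝ} (hC : 0 < C)
    (hθ0 : 0 ≤ θ) (hθ : θ < 1 / 2)
    (hgrowth : ∀ n : ℕ, 0 < n → (growth X n : ℝ) ≤ Real.exp (C * (n : ℝ) ^ θ)) (Λ : ℕ) :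
    growth X (windowSize C θ Λ * (2 * windowSize C θ Λ + Λ)) < 2 ^ windowSize C θ Λ := by
  set N := windowSize C θ Λ
  have hceil : (6 * C) ^ (1 - 2 * θ)⁻¹ + (6 * C * (Λ : ℝ) ^ θ) ^ (1 - θ)⁻¹ ≤ (N : ℝ) :=
    Nat.le_ceil _
  have hN : 0 < N := Nat.ceil_pos.mpr (by positivity)
  have hNθ : (0 : ℝ) ≤ (N : ℝ) ^ θ := by positivity
  have h₁ : 6 * C ≤ (N : ℝ) ^ (1 - 2 * θ) :=
    (Real.rpow_inv_le_iff_of_pos (by positivity) (by positivity) (by linarith)).mp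
      (by linarith [Real.rpow_nonneg (by positivity : 0 ≤ 6 * C * (Λ : ℝ) ^ θ) (1 - θ)⁻¹])
  have h₂ : 6 * C * (Λ : ℝ) ^ θ ≤ (N : ℝ) ^ (1 - θ) :=
    (Real.rpow_inv_le_iff_of_pos (by positivity) (by positivity) (by linarith)).mp
      (by linarith [Real.rpow_nonneg (by positivity : 0 ≤ 6 * C) (1 - 2 * θ)⁻¹])
  have hsplit₁ : (N : ℝ) ^ (1 - 2 * θ) * (N : ℝ) ^ θ * (N : ℝ) ^ θ = N := by
    rw [← Real.rpow_add (by positivity), ← Real.rpow_add (by positivity),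
      show 1 - 2 * θ + θ + θ = 1 by ring, Real.rpow_one]
  have hsplit₂ : (N : ℝ) ^ (1 - θ) * (N : ℝ) ^ θ = N := by
    rw [← Real.rpow_add (by positivity), sub_add_cancel, Real.rpow_one]
  have hlt := mul_rpow_mul_add_lt hC.le hθ0 (by linarith) (Nat.cast_pos.mpr hN)
    (Nat.cast_nonneg Λ) (by nlinarith) (by nlinarith)
  have hgr := hgrowth (N * (2 * N + Λ)) (by positivity)
  have hexp : Real.exp (N * Real.log 2) = 2 ^ N := by
    rw [Real.exp_nat_mul, Real.exp_log two_pos]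
  push_cast at hgr
  exact_mod_cast hgr.trans_lt (hexp ▸ Real.exp_lt_exp.mpr hlt)

theorem exists_windowSize_le {C θ : ℝ} (hC : 0 ≤ C) :
    ∃ A, 0 ≤ A ∧ ∀ Λ : ℕ, (windowSize C θ Λ : ℝ) ≤ A * (1 + (Λ : ℝ) ^ (θ / (1 - θ))) := by
  refine ⟨(6 * C) ^ (1 - 2 * θ)⁻¹ + (6 * C) ^ (1 - θ)⁻¹ + 1, by positivity, fun Λ => ?_⟩
  have hceil : (windowSize C θ Λ : ℝ) <
      (6 * C) ^ (1 - 2 * θ)⁻¹ + (6 * C * (Λ : ℝ) ^ θ) ^ (1 - θ)⁻¹ + 1 :=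
    Nat.ceil_lt_add_one (by positivity)
  rw [Real.mul_rpow (x := 6 * C) (by positivity) (by positivity),
    ← Real.rpow_mul (Nat.cast_nonneg Λ), ← div_eq_mul_inv] at hceil
  have : (0 : ℝ) ≤ (Λ : ℝ) ^ (θ / (1 - θ)) := by positivity
  have : (0 : ℝ) ≤ (6 * C) ^ (1 - 2 * θ)⁻¹ := by positivity
  have : (0 : ℝ) ≤ (6 * C) ^ (1 - θ)⁻¹ := by positivity
  nlinarith

theorem exists_derivedRadius_le {W : ℕ → ℕ} {α A : ℝ} (hα0 : 0 ≤ α) (hα : α < 1) (hA : 0 ≤ A)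
    (hW : ∀ Λ : ℕ, (W Λ : ℝ) ≤ A * (1 + (Λ : ℝ) ^ α)) :
    ∃ C₂, 0 < C₂ ∧ ∀ k, (derivedRadius W k : ℝ) ≤ C₂ * 4 ^ k := by
  refine exists_le_mul_pow_of_le_mul_add_rpow (by norm_num) hα0 hα (by positivity : 0 ≤ 8 * A)
    (fun k => Nat.cast_nonneg _) fun k => ?_
  set R := derivedRadius W k
  have h4 : ((4 * R : ℕ) : ℝ) ^ α ≤ 4 * (R : ℝ) ^ α := by
    push_cast
    rw [Real.mul_rpow (by norm_num) (Nat.cast_nonneg R)]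
    gcongr
    exact Real.rpow_le_self_of_one_le (by norm_num) hα.le
  have := hW (4 * R)
  have : (0 : ℝ) ≤ (R : ℝ) ^ α := by positivity
  simp only [derivedRadius]
  push_cast
  nlinarith

theorem derived_series_generators_general (θ C : ℝ) (hθ : θ < 1 / 2) :
    ∃ C₂ : ℝ, 0 < C₂ ∧
      ∀ (G : Type u) [Group G] (X : Finset G),
        Subgroup.closure (X : Set G) = ⊤ →
        (∀ n : ℕ, 0 < n → (growth (X : Set G) n : ℝ) ≤ Real.exp (C * (n : ℝ) ^ θ)) →
        ∀ k : ℕ, ∃ Xk : Finset G,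
          Subgroup.closure (Xk : Set G) = derivedSeries G k ∧
          ((Xk.sup (wordLength (X : Set G)) : ℕ) : ℝ) ≤ C₂ * 4 ^ k := by
  obtain ⟨θ', hθθ', hθ'0, hθ'⟩ : ∃ θ', θ ≤ θ' ∧ 0 ≤ θ' ∧ θ' < 1 / 2 :=
    ⟨max θ 0, le_max_left θ 0, le_max_right θ 0, max_lt hθ (by norm_num)⟩
  obtain ⟨C', hCC', hC'⟩ : ∃ C', C ≤ C' ∧ 0 < C' := ⟨max C 1, le_max_left C 1, by positivity⟩
  obtain ⟨A, hA, hW⟩ := exists_windowSize_le (θ := θ') hC'.le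
  obtain ⟨C₂, hC₂, hR⟩ := exists_derivedRadius_le (div_nonneg hθ'0 (by linarith))
    ((div_lt_one (by linarith)).mpr (by linarith)) hA hW
  refine ⟨C₂, hC₂, fun G _ X hX hgrowth k => ?_⟩
  have hgrowth' : ∀ n : ℕ, 0 < n →
      (growth (X : Set G) n : ℝ) ≤ Real.exp (C' * (n : ℝ) ^ θ') := fun n hn => by
    have hpow : (n : ℝ) ^ θ ≤ (n : ℝ) ^ θ' :=
      Real.rpow_le_rpow_of_exponent_le (by exact_mod_cast hn) hθθ'
    refine (hgrowth n hn).trans (Real.exp_le_exp.mpr ?_)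
    nlinarith [Real.rpow_nonneg (Nat.cast_nonneg n) θ]
  obtain ⟨Xk, hXk, hlen⟩ := exists_finset_closure_eq_derivedSeries hX X.finite_toSet _
    (growth_lt_two_pow_windowSize hC' hθ'0 hθ' hgrowth') k
  exact ⟨Xk, hXk, (Nat.cast_le.mpr hlen).trans (hR k)⟩

/-- For all `θ < 1/2` and `C ≥ 1` there is a constant `C₂ > 0` such that: whenever
`G = ⟨X⟩` satisfies `γ_X(n) ≤ exp(C n^θ)` for all `n > 0`, each derived subgroup
`G^(k)` is generated by a finite set `X_k` with `ℓ_X(X_k) ≤ C₂ · 4^k`. -/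
theorem derived_series_generators (θ C : ℝ) (hθ : θ < 1 / 2) (hC : 1 ≤ C) :
    ∃ C₂ : ℝ, 0 < C₂ ∧
      ∀ (G : Type u) [Group G] (X : Finset G),
        Subgroup.closure (X : Set G) = ⊤ →
        (∀ n : ℕ, 0 < n → (growth (X : Set G) n : ℝ) ≤ Real.exp (C * (n : ℝ) ^ θ)) →
        ∀ k : ℕ, ∃ Xk : Finset G,
          Subgroup.closure (Xk : Set G) = derivedSeries G k ∧
          ((Xk.sup (wordLength (X : Set G)) : ℕ) : ℝ) ≤ C₂ * 4 ^ k :=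
  derived_series_generators_general θ C hθ
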